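/- Let G be a parity game and let ρ̄ be the least game parity progress measure of G with respect to the pointwise order ⊑ (i.e., ρ̄ is a game parity progress measure and ρ̄ ⊑ ρ for every game parity progress measure ρ). Then for every vertex v ∈ V: ρ̄(v) ≠ ⊤ if and only if player Even has a winning strategy from v (i.e., v ∈ W_Even(G)). -/

import Mathlib

open Classical

noncomputable section

instance (priority := 5000) (n : ℕ) : WellFoundedLT (Fin n) :=
  Finite.to_wellFoundedLT

noncomputable instance (priority := 5000) (n : ℕ) : LinearOrder (Lex (Fin n → ℕ)) :=
  inferInstance

/-- Least element of a set, if it exists; otherwise a default value. -/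
def sLeast {α : Type*} [Preorder α] (s : Set α) (dflt : α) : α :=
  if h : ∃ a, IsLeast s a then h.choose else dflt

/-- Greatest element of a set, if it exists; otherwise a default value. -/
def sGreatest {α : Type*} [Preorder α] (s : Set α) (dflt : α) : α :=
  if h : ∃ a, IsGreatest s a then h.choose else dflt

/-- A parity game: a finite set of vertices with a total edge relation, a priority
function and an ownership function (`ownerEven v = true` iff `v ∈ V_Even`). -/
structure ParityGame (V : Type*) [Fintype V] where
  E : V → V → Prop
  total : ∀ v, ∃ w, E v w
  prio : V → ℕ
  ownerEven : V → Bool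

namespace ParityGame

variable {V : Type*} [Fintype V] [DecidableEq V] (G : ParityGame V)

/-- `d` is one plus the maximal priority occurring in the game. -/
def d : ℕ := (Finset.univ.sup G.prio) + 1

/-- The domain of (extended) measures: `⊤` together with `d`-tuples of naturals,
ordered lexicographically with `⊤` maximal.  This is `M_Even_ext` (together with
tuples that are nonzero at even positions, which are never used). -/
abbrev Meas : Type _ := WithTop (Lex (Fin G.d → ℕ))

/-- `nP i` is the number of vertices of priority `i`. -/
def nP (i : ℕ) : ℕ := (Finset.univ.filter (fun v => G.prio v = i)).card

/-- Membership in `M_Even`: `⊤`, or a `d`-tuple which is `0` at even positions and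
bounded by `nP i` at odd positions `i`. -/
def inMEven (m : G.Meas) : Prop :=
  m = ⊤ ∨ ∃ f : Fin G.d → ℕ, m = ((toLex f : Lex (Fin G.d → ℕ)) : G.Meas) ∧
    ∀ i : Fin G.d, (Even (i : ℕ) → f i = 0) ∧ (¬ Even (i : ℕ) → f i ≤ G.nP (i : ℕ))

/-- Membership in `M_Even_ext`: `⊤`, or a `d`-tuple which is `0` at even positions. -/
def inMEvenExt (m : G.Meas) : Prop :=
  m = ⊤ ∨ ∃ f : Fin G.d → ℕ, m = ((toLex f : Lex (Fin G.d → ℕ)) : G.Meas) ∧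
    ∀ i : Fin G.d, Even (i : ℕ) → f i = 0

/-- Truncation of a measure to components `0, …, k` (other components set to `0`);
`⊤` is mapped to `⊤`. -/
def trunc (k : ℕ) (m : G.Meas) : G.Meas :=
  WithTop.map (fun f : Lex (Fin G.d → ℕ) => toLex (fun j : Fin G.d => if (j : ℕ) ≤ k then ofLex f j else 0)) m

/-- `a ≥_k b` : comparison of measures on components `0, …, k` only. -/
def geAt (k : ℕ) (a b : G.Meas) : Prop := G.trunc k b ≤ G.trunc k a

/-- `a >_k b` : strict comparison of measures on components `0, …, k` only. -/
def gtAt (k : ℕ) (a b : G.Meas) : Prop := G.trunc k b < G.trunc k a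

/-- The defining condition of `Prog(ρ,v,w)`. -/
def progCond (ρ : V → G.Meas) (v w : V) (m : G.Meas) : Prop :=
  if Even (G.prio v) then G.geAt (G.prio v) m (ρ w)
  else (G.gtAt (G.prio v) m (ρ w) ∨ (m = ⊤ ∧ ρ w = ⊤))

/-- `Prog(ρ,v,w)`: the least element of `M_Even` satisfying `progCond`. -/
def Prog (ρ : V → G.Meas) (v w : V) : G.Meas :=
  if h : ∃ m, IsLeast {m | G.inMEven m ∧ G.progCond ρ v w m} m then h.choose else ⊤

/-- `ρ` takes values in `M_Even`. -/
def IsMeasure (ρ : V → G.Meas) : Prop := ∀ v, G.inMEven (ρ v)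

/-- Game parity progress measure. -/
def IsGPM (ρ : V → G.Meas) : Prop :=
  G.IsMeasure ρ ∧ ∀ v,
    (G.ownerEven v = true → ∃ w, G.E v w ∧ G.geAt (G.prio v) (ρ v) (G.Prog ρ v w)) ∧
    (G.ownerEven v = false → ∀ w, G.E v w → G.geAt (G.prio v) (ρ v) (G.Prog ρ v w))

/-- A play: an infinite `E`-path. -/
def IsPlay (π : ℕ → V) : Prop := ∀ n, G.E (π n) (π (n + 1))

/-- Priority `p` occurs infinitely often on `π`. -/
def InfOft (π : ℕ → V) (p : ℕ) : Prop := ∀ N, ∃ n, N ≤ n ∧ G.prio (π n) = p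

/-- A play is won by Even iff the least priority occurring infinitely often is even. -/
def WonByEven (π : ℕ → V) : Prop := Even (sInf {p | G.InfOft π p})

/-- Won by player `i` (`true` = Even, `false` = Odd). -/
def WonBy (i : Bool) (π : ℕ → V) : Prop :=
  if i then G.WonByEven π else ¬ G.WonByEven π

/-- The history of a play before time `n`. -/
def hist (π : ℕ → V) (n : ℕ) : List V := List.ofFn (fun k : Fin n => π (k : ℕ))

/-- A (history-dependent) strategy for player `i` is valid if it always moves along edges
from vertices of player `i`. -/
def ValidStrat (i : Bool) (σ : List V → V → V) : Prop :=
  ∀ h v, G.ownerEven v = i → G.E v (σ h v)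

/-- Consistency of a play with a history-dependent strategy of player `i`. -/
def ConsH (i : Bool) (σ : List V → V → V) (π : ℕ → V) : Prop :=
  ∀ n, G.ownerEven (π n) = i → π (n + 1) = σ (hist π n) (π n)

/-- Consistency of a play with a positional strategy of player `i`. -/
def ConsP (i : Bool) (σ : V → V) (π : ℕ → V) : Prop :=
  ∀ n, G.ownerEven (π n) = i → π (n + 1) = σ (π n)

/-- Winning region of player `i`: vertices from which `i` has a winning strategy. -/
def WinRegion (i : Bool) : Set V :=
  {v | ∃ σ : List V → V → V, G.ValidStrat i σ ∧
    ∀ π, G.IsPlay π → π 0 = v → G.ConsH i σ π → G.WonBy i π}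

/-- The `i`-attractor into `U`. -/
def Attr (i : Bool) (U : Set V) : Set V :=
  ⋂₀ {A | U ⊆ A ∧
    (∀ v, G.ownerEven v = i → (∃ w, G.E v w ∧ w ∈ A) → v ∈ A) ∧
    (∀ v, G.ownerEven v ≠ i → (∀ w, G.E v w → w ∈ A) → v ∈ A)}

/-- The guarded attractor `Attr^{≥k}_{Odd,W}(U)`. -/
def GAttr (k : ℕ) (W U : Set V) : Set V :=
  ⋂₀ {A | U ⊆ A ∧ A ⊆ W ∩ {v | k ≤ G.prio v} ∧
    ∀ u ∈ W ∩ {v | k ≤ G.prio v},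
      (G.ownerEven u = false → (∃ w, G.E u w ∧ w ∈ A) → u ∈ A) ∧
      (G.ownerEven u = true → (∀ w, G.E u w → w ∈ W → w ∈ A) → u ∈ A)}

/-- The lifting operator `Lift(ρ, v)`. -/
def Lift (ρ : V → G.Meas) (v : V) : V → G.Meas :=
  Function.update ρ v
    (if G.ownerEven v = true
      then max (ρ v) (sLeast {m | ∃ w, G.E v w ∧ m = G.Prog ρ v w} ⊤)
      else max (ρ v) (sGreatest {m | ∃ w, G.E v w ∧ m = G.Prog ρ v w} ⊤))

/-- The all-zero measure. -/
def zeroMeas : G.Meas := ((toLex (fun _ : Fin G.d => 0) : Lex (Fin G.d → ℕ)) : G.Meas)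

/-- A lifting sequence `ρ₀, …, ρ_N` in which `v` is the first vertex lifted to `⊤`. -/
def FirstTop (ρs : ℕ → V → G.Meas) (N : ℕ) (v : V) : Prop :=
  (∀ u, ρs 0 u = G.zeroMeas) ∧
  (∀ j < N, ∃ u, ρs (j + 1) = G.Lift (ρs j) u ∧
    (∀ w, ρs j w ≤ ρs (j + 1) w) ∧ ρs j ≠ ρs (j + 1)) ∧
  (∀ j < N, ∀ w, ρs j w ≠ ⊤) ∧
  ρs N v = ⊤

/-- The prefix `π 0 … π l` of a play is an `i`-dominated stretch. -/
def domStretchPrefix (π : ℕ → V) (i l : ℕ) : Prop :=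
  (∀ m ≤ l, i ≤ G.prio (π m)) ∧ (∃ m ≤ l, G.prio (π m) = i)

/-- The degree of the prefix `π 0 … π l` with respect to priority `i`: the number of
its vertices of priority `i`. -/
def degree (π : ℕ → V) (i l : ℕ) : ℕ :=
  ((Finset.range (l + 1)).filter (fun m => G.prio (π m) = i)).card

/-- The value `θ(π)` of a play: `⊤` if `π` is won by Odd, and otherwise the tuple whose
component at each odd position `i` is the degree of the maximal `i`-dominated stretch
that is a prefix of `π` (and `0` if there is no such prefix). -/
def theta (π : ℕ → V) : G.Meas :=
  if G.WonByEven π then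
    ((toLex (fun j : Fin G.d =>
      if Even (j : ℕ) then 0
      else sSup {c | ∃ l, G.domStretchPrefix π (j : ℕ) l ∧ c = G.degree π (j : ℕ) l}) :
        Lex (Fin G.d → ℕ)) : G.Meas)
  else ⊤

/-- `U` is an `i`-dominion inside the subgame induced on `W`. -/
def IsDominionIn (W : Set V) (i : Bool) (U : Set V) : Prop :=
  ∃ σ : List V → V → V,
    (∀ h u, u ∈ W → G.ownerEven u = i → G.E u (σ h u) ∧ σ h u ∈ W) ∧
    ∀ π, G.IsPlay π → (∀ n, π n ∈ W) → π 0 ∈ U → G.ConsH i σ π →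
      (∀ n, π n ∈ U) ∧ G.WonBy i π

/-- `U` is an `i`-dominion in `G`. -/
def IsDominion (i : Bool) (U : Set V) : Prop := G.IsDominionIn Set.univ i U

/-- Winning region of player `i` in the subgame induced on `W`. -/
def WinIn (W : Set V) (i : Bool) : Set V :=
  {v | v ∈ W ∧ ∃ σ : List V → V → V,
    (∀ h u, u ∈ W → G.ownerEven u = i → G.E u (σ h u) ∧ σ h u ∈ W) ∧
    ∀ π, G.IsPlay π → (∀ n, π n ∈ W) → π 0 = v → G.ConsH i σ π → G.WonBy i π}

end ParityGame

open ParityGame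

/-!
A game parity progress measure `ρ` certifies a positional strategy of Even from every vertex
`v` with `ρ v ≠ ⊤`: always move to a successor witnessing the progress condition. Along a
play of this strategy the measure, truncated at the least priority `q` recurring in the play,
eventually never increases, and it strictly drops at every visit of `q` if `q` is odd; by
well-foundedness `q` is even.

Conversely, Zielonka's recursion shows that parity games are positionally determined. From a
positional winning strategy `τ` of Even on her winning region one reads off a progress
measure: its component at an odd `j` is the largest number of visits of priority `j` in a
prefix of a `τ`-play in which all priorities are at least `j`. This is at most `nP j`, as a
repeated vertex of priority `j` would close a cycle whose lasso is a `τ`-play won by Odd.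
Since `ρbar` is below this measure, it is finite on Even's winning region.
-/

namespace ParityGame

variable {V : Type*} [Fintype V] (G : ParityGame V)

section Plays

variable {G}

theorem IsPlay.shift {π : ℕ → V} (h : G.IsPlay π) (k : ℕ) : G.IsPlay (fun n => π (n + k)) :=
  fun n => by simpa [Nat.add_right_comm] using h (n + k)

variable (G)

theorem infOft_shift_iff (π : ℕ → V) (k p : ℕ) :
    G.InfOft (fun n => π (n + k)) p ↔ G.InfOft π p := by
  constructor
  · intro h N
    obtain ⟨n, hn, hp⟩ := h N
    exact ⟨n + k, by omega, hp⟩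
  · intro h N
    obtain ⟨n, hn, hp⟩ := h (N + k)
    exact ⟨n - k, by omega, by simpa only [Nat.sub_add_cancel (show k ≤ n by omega)]⟩

theorem wonBy_shift_iff (i : Bool) (π : ℕ → V) (k : ℕ) :
    G.WonBy i (fun n => π (n + k)) ↔ G.WonBy i π := by
  simp only [WonBy, WonByEven, infOft_shift_iff]

theorem not_wonBy_of_wonBy_not {i : Bool} {π : ℕ → V} (h : G.WonBy (!i) π) : ¬ G.WonBy i π := by
  cases i <;> simp_all [WonBy]

theorem exists_forall_ge_infOft (π : ℕ → V) : ∃ N, ∀ n ≥ N, G.InfOft π (G.prio (π n)) := by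
  have h : ∀ u : V, ∃ N, ¬ G.InfOft π (G.prio u) → ∀ n ≥ N, G.prio (π n) ≠ G.prio u := by
    intro u
    by_cases hu : G.InfOft π (G.prio u)
    · exact ⟨0, fun h => absurd hu h⟩
    · simp only [InfOft, not_forall, not_exists, not_and] at hu
      obtain ⟨N, hN⟩ := hu
      exact ⟨N, fun _ n hn => hN n hn⟩
  choose N hN using h
  refine ⟨Finset.univ.sup N, fun n hn => ?_⟩
  by_contra hinf
  exact hN (π n) hinf n (le_trans (Finset.le_sup (Finset.mem_univ _)) hn) rfl

theorem wonByEven_iff_of_infOft {π : ℕ → V} {p : ℕ} (hp : G.InfOft π p)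
    (hmin : ∀ q, G.InfOft π q → p ≤ q) : G.WonByEven π ↔ Even p := by
  have : sInf {q | G.InfOft π q} = p := le_antisymm (Nat.sInf_le hp) (le_csInf ⟨p, hp⟩ hmin)
  rw [WonByEven, this]

theorem wonBy_of_forall_prio_ge {π : ℕ → V} {p : ℕ} (hp : G.InfOft π p)
    (hmin : ∀ n, p ≤ G.prio (π n)) : G.WonBy (decide (Even p)) π := by
  have hmin' : ∀ q, G.InfOft π q → p ≤ q := fun q hq => by
    obtain ⟨n, -, hn⟩ := hq 0
    exact hn ▸ hmin n
  by_cases h : Even p <;> simp [WonBy, h, G.wonByEven_iff_of_infOft hp hmin']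

end Plays

section Measures

@[simp] theorem trunc_top (k : ℕ) : G.trunc k (⊤ : G.Meas) = ⊤ := rfl

@[simp] theorem trunc_coe (k : ℕ) (f : Lex (Fin G.d → ℕ)) :
    G.trunc k f = (toLex (fun j : Fin G.d => if (j : ℕ) ≤ k then ofLex f j else 0) :
      Lex (Fin G.d → ℕ)) := rfl

theorem trunc_eq_top_iff {k : ℕ} {m : G.Meas} : G.trunc k m = ⊤ ↔ m = ⊤ := by
  induction m using WithTop.recTopCoe <;> simp

theorem trunc_mono (k : ℕ) : Monotone (G.trunc k) := by
  intro a b hab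
  induction b using WithTop.recTopCoe with
  | top => exact le_top
  | coe g =>
  induction a using WithTop.recTopCoe with
  | top => exact absurd (top_le_iff.mp hab) WithTop.coe_ne_top
  | coe f =>
  obtain hlt | rfl := (WithTop.coe_le_coe.mp hab).lt_or_eq
  · obtain ⟨i, hagree, hi⟩ := hlt
    rw [trunc_coe, trunc_coe, WithTop.coe_le_coe]
    by_cases hik : (i : ℕ) ≤ k
    · refine le_of_lt ⟨i, fun j hj => ?_, by simpa [hik] using hi⟩
      simp only [Pi.toLex_apply, Pi.ofLex_apply, hagree j hj]
    · refine le_of_eq (congrArg toLex (funext fun j => ?_))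
      by_cases hjk : (j : ℕ) ≤ k
      · simp only [hjk, if_true, Pi.ofLex_apply, hagree j (show (j : ℕ) < i by omega)]
      · simp only [hjk, if_false]
  · exact le_rfl

theorem trunc_trunc {k p : ℕ} (h : k ≤ p) (m : G.Meas) :
    G.trunc k (G.trunc p m) = G.trunc k m := by
  induction m using WithTop.recTopCoe with
  | top => rfl
  | coe f =>
    rw [trunc_coe, trunc_coe, trunc_coe]
    congr 2
    funext j
    by_cases hj : (j : ℕ) ≤ k
    · simp [hj, hj.trans h]
    · simp [hj]

theorem geAt_of_geAt_of_le {k p : ℕ} {a b : G.Meas} (hkp : k ≤ p) (h : G.geAt p a b) :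
    G.geAt k a b := by
  simpa only [geAt, trunc_trunc _ hkp] using G.trunc_mono k h

theorem geAt_top (k : ℕ) (m : G.Meas) : G.geAt k ⊤ m := le_top

theorem eq_top_of_geAt_top {k : ℕ} {a : G.Meas} (h : G.geAt k a ⊤) : a = ⊤ :=
  G.trunc_eq_top_iff.mp (top_le_iff.mp h)

theorem progCond_top (ρ : V → G.Meas) (v w : V) : G.progCond ρ v w ⊤ := by
  unfold progCond
  split_ifs
  · exact G.geAt_top _ _
  · by_cases hw : ρ w = ⊤
    · exact Or.inr ⟨rfl, hw⟩
    · exact Or.inl (lt_top_iff_ne_top.mpr (mt G.trunc_eq_top_iff.mp hw))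

theorem isLeast_prog (ρ : V → G.Meas) (v w : V) :
    IsLeast {m | G.inMEven m ∧ G.progCond ρ v w m} (G.Prog ρ v w) := by
  have h : ∃ m, IsLeast {m | G.inMEven m ∧ G.progCond ρ v w m} m := by
    obtain ⟨m, hm, hmin⟩ := WellFounded.has_min wellFounded_lt
      {m | G.inMEven m ∧ G.progCond ρ v w m} ⟨⊤, Or.inl rfl, G.progCond_top ρ v w⟩
    exact ⟨m, hm, fun x hx => not_lt.mp (hmin x hx)⟩
  rw [Prog, dif_pos h]
  exact h.choose_spec

theorem geAt_prog {ρ : V → G.Meas} {v w : V} (hv : G.inMEven (ρ v))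
    (h : G.progCond ρ v w (ρ v)) : G.geAt (G.prio v) (ρ v) (G.Prog ρ v w) :=
  G.trunc_mono _ ((G.isLeast_prog ρ v w).2 ⟨hv, h⟩)

theorem geAt_of_geAt_prog {ρ : V → G.Meas} {v w : V}
    (h : G.geAt (G.prio v) (ρ v) (G.Prog ρ v w)) :
    G.geAt (G.prio v) (ρ v) (ρ w) ∧
      (¬ Even (G.prio v) → G.gtAt (G.prio v) (ρ v) (ρ w) ∨ ρ v = ⊤) := by
  have hc := (G.isLeast_prog ρ v w).1.2
  unfold progCond at hc
  split_ifs at hc with hp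
  · exact ⟨le_trans hc h, fun h' => absurd hp h'⟩
  · rcases hc with hgt | ⟨htop, -⟩
    · have : G.gtAt (G.prio v) (ρ v) (ρ w) := lt_of_lt_of_le hgt h
      exact ⟨this.le, fun _ => Or.inl this⟩
    · have : ρ v = ⊤ := G.eq_top_of_geAt_top (htop ▸ h)
      exact ⟨this ▸ G.geAt_top _ _, fun _ => Or.inr this⟩

theorem prio_lt_d (v : V) : G.prio v < G.d :=
  Nat.lt_succ_of_le (Finset.le_sup (Finset.mem_univ v))

theorem progCond_self_of_le {ρ : V → G.Meas} {v w : V} {f g : Fin G.d → ℕ}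
    (hv : ρ v = (toLex f : Lex (Fin G.d → ℕ))) (hw : ρ w = (toLex g : Lex (Fin G.d → ℕ)))
    (hle : ∀ j : Fin G.d, (j : ℕ) ≤ G.prio v → g j ≤ f j)
    (hlt : ¬ Even (G.prio v) → g ⟨G.prio v, G.prio_lt_d v⟩ < f ⟨G.prio v, G.prio_lt_d v⟩) :
    G.progCond ρ v w (ρ v) := by
  have htrunc : ∀ j : Fin G.d, (if (j : ℕ) ≤ G.prio v then g j else 0) ≤
      (if (j : ℕ) ≤ G.prio v then f j else 0) := fun j => by
    split_ifs with h
    exacts [hle j h, le_rfl]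
  unfold progCond geAt gtAt
  rw [hv, hw, trunc_coe, trunc_coe]
  split_ifs with hp
  · exact WithTop.coe_le_coe.mpr (Pi.toLex_monotone htrunc)
  · refine Or.inl (WithTop.coe_lt_coe.mpr (Pi.toLex_strictMono (Pi.lt_def.mpr
      ⟨htrunc, ⟨G.prio v, G.prio_lt_d v⟩, ?_⟩)))
    simpa using hlt hp

end Measures

section ProgressMeasureWins

theorem wonByEven_of_forall_geAt_prog {ρ : V → G.Meas} {π : ℕ → V} (h0 : ρ (π 0) ≠ ⊤)
    (hstep : ∀ n, G.geAt (G.prio (π n)) (ρ (π n)) (G.Prog ρ (π n) (π (n + 1)))) :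
    G.WonByEven π := by
  have hdesc := fun n => G.geAt_of_geAt_prog (hstep n)
  have hfin : ∀ n, ρ (π n) ≠ ⊤ := by
    intro n
    induction n with
    | zero => exact h0
    | succ n ih => exact fun h => ih (G.eq_top_of_geAt_top (h ▸ (hdesc n).1))
  obtain ⟨N, hN⟩ := G.exists_forall_ge_infOft π
  set q := sInf {p | G.InfOft π p}
  have hq : G.InfOft π q := Nat.sInf_mem (s := {p | G.InfOft π p}) ⟨_, hN N le_rfl⟩
  have hge : ∀ n ≥ N, q ≤ G.prio (π n) := fun n hn => Nat.sInf_le (hN n hn)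
  by_contra hodd
  set f : ℕ → G.Meas := fun k => G.trunc q (ρ (π (N + k)))
  have hanti : Antitone f := antitone_nat_of_succ_le fun k =>
    G.geAt_of_geAt_of_le (hge _ (by omega)) (hdesc (N + k)).1
  obtain ⟨k₀, hk₀⟩ := WellFoundedLT.antitone_chain_condition hanti
  obtain ⟨n, hn, hqn⟩ := hq (N + k₀)
  have hdrop : f (n - N + 1) < f (n - N) := by
    have h := (hdesc n).2 (hqn ▸ hodd)
    rw [hqn] at h
    simpa only [f, gtAt, show N + (n - N) = n by omega, show N + (n - N + 1) = n + 1 by omega]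
      using h.resolve_right (hfin n)
  rw [← hk₀ (n - N + 1) (by omega), ← hk₀ (n - N) (by omega)] at hdrop
  exact lt_irrefl _ hdrop

theorem mem_winRegion_of_isGPM {ρ : V → G.Meas} (hρ : G.IsGPM ρ) {v : V} (hv : ρ v ≠ ⊤) :
    v ∈ G.WinRegion true := by
  have hmove : ∀ u, ∃ w, G.E u w ∧
      (G.ownerEven u = true → G.geAt (G.prio u) (ρ u) (G.Prog ρ u w)) := by
    intro u
    by_cases hu : G.ownerEven u = true
    · obtain ⟨w, hw⟩ := (hρ.2 u).1 hu
      exact ⟨w, hw.1, fun _ => hw.2⟩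
    · obtain ⟨w, hw⟩ := G.total u
      exact ⟨w, hw, fun h => absurd h hu⟩
  choose σ hσE hσ using hmove
  refine ⟨fun _ u => σ u, fun _ u _ => hσE u, fun π hplay h0 hcons => ?_⟩
  show G.WonByEven π
  refine G.wonByEven_of_forall_geAt_prog (h0 ▸ hv) fun n => ?_
  cases hown : G.ownerEven (π n)
  · exact (hρ.2 (π n)).2 hown _ (hplay n)
  · exact hcons n hown ▸ hσ _ hown

end ProgressMeasureWins

section Strategies

def IsSubgame (S : Set V) : Prop := ∀ v ∈ S, ∃ w ∈ S, G.E v w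

def ConsOn (i : Bool) (σ : V → V) (X : Set V) (π : ℕ → V) : Prop :=
  ∀ n, π n ∈ X → G.ownerEven (π n) = i → π (n + 1) = σ (π n)

variable {G}

theorem ConsOn.mono {i : Bool} {σ : V → V} {X Y : Set V} {π : ℕ → V} (h : G.ConsOn i σ Y π)
    (hXY : X ⊆ Y) : G.ConsOn i σ X π :=
  fun n hn => h n (hXY hn)

theorem ConsOn.shift {i : Bool} {σ : V → V} {X : Set V} {π : ℕ → V} (h : G.ConsOn i σ X π)
    (k : ℕ) : G.ConsOn i σ X (fun n => π (n + k)) :=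
  fun n hn ho => by simpa [Nat.add_right_comm] using h (n + k) hn ho

theorem ConsOn.consP {i : Bool} {σ : V → V} {X : Set V} {π : ℕ → V} (h : G.ConsOn i σ X π)
    (hX : ∀ n, π n ∈ X) : G.ConsP i σ π :=
  fun n => h n (hX n)

theorem ConsP.consOn_piecewise_left {i : Bool} {σ τ : V → V} {Y : Set V}
    [∀ v, Decidable (v ∈ Y)] {π : ℕ → V}
    (h : G.ConsP i (Y.piecewise σ τ) π) : G.ConsOn i σ Y π :=
  fun n hn ho => (h n ho).trans (Set.piecewise_eq_of_mem _ _ _ hn)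

theorem ConsP.consOn_piecewise_right {i : Bool} {σ τ : V → V} {Y : Set V}
    [∀ v, Decidable (v ∈ Y)] {π : ℕ → V}
    (h : G.ConsP i (Y.piecewise σ τ) π) : G.ConsOn i τ Yᶜ π :=
  fun n hn ho => (h n ho).trans (Set.piecewise_eq_of_notMem _ _ _ hn)

variable (G)

structure IsPositionalDominion (S W : Set V) (i : Bool) (σ : V → V) : Prop where
  subset : W ⊆ S
  move : ∀ u ∈ W, G.ownerEven u = i → G.E u (σ u) ∧ σ u ∈ W
  trap : ∀ u ∈ W, G.ownerEven u ≠ i → ∀ w ∈ S, G.E u w → w ∈ W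
  wins : ∀ π, G.IsPlay π → (∀ n, π n ∈ W) → G.ConsP i σ π → G.WonBy i π

theorem isPositionalDominion_empty (S : Set V) (i : Bool) (σ : V → V) :
    G.IsPositionalDominion S ∅ i σ :=
  ⟨Set.empty_subset S, fun _ h => h.elim, fun _ h => h.elim, fun _ _ h _ => (h 0).elim⟩

variable {G}

namespace IsPositionalDominion

variable {S W : Set V} {i : Bool} {σ : V → V} {π : ℕ → V}

theorem forall_mem (hW : G.IsPositionalDominion S W i σ) (hplay : G.IsPlay π)
    (hS : ∀ n, π n ∈ S) (hcons : G.ConsOn i σ W π) (h0 : π 0 ∈ W) : ∀ n, π n ∈ W := by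
  intro n
  induction n with
  | zero => exact h0
  | succ n ih =>
    by_cases ho : G.ownerEven (π n) = i
    · exact hcons n ih ho ▸ (hW.move _ ih ho).2
    · exact hW.trap _ ih ho _ (hS (n + 1)) (hplay n)

theorem wonBy (hW : G.IsPositionalDominion S W i σ) (hplay : G.IsPlay π)
    (hS : ∀ n, π n ∈ S) (hcons : G.ConsOn i σ W π) (h0 : π 0 ∈ W) : G.WonBy i π :=
  have hmem := hW.forall_mem hplay hS hcons h0
  hW.wins π hplay hmem (hcons.consP hmem)

theorem wonBy_of_mem (hW : G.IsPositionalDominion S W i σ) (hplay : G.IsPlay π)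
    (hS : ∀ n, π n ∈ S) (hcons : G.ConsOn i σ W π) {k : ℕ} (hk : π k ∈ W) : G.WonBy i π :=
  (G.wonBy_shift_iff i π k).mp <|
    hW.wonBy (hplay.shift k) (fun n => hS (n + k)) (hcons.shift k) (by simpa using hk)

end IsPositionalDominion

end Strategies

section Attractors

/-- `attrInN i S U n`: the vertices from which player `i` forces a visit to `U` in at most
`n` moves while the play stays in `S`. -/
def attrInN (i : Bool) (S U : Set V) : ℕ → Set V
  | 0 => U
  | n + 1 => attrInN i S U n ∪
      {v | v ∈ S ∧ ((G.ownerEven v = i ∧ ∃ w ∈ attrInN i S U n, G.E v w) ∨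
        (G.ownerEven v ≠ i ∧ ∀ w ∈ S, G.E v w → w ∈ attrInN i S U n))}

def attrIn (i : Bool) (S U : Set V) : Set V := ⋃ n, G.attrInN i S U n

variable {i : Bool} {S U : Set V}

theorem attrInN_mono : Monotone (G.attrInN i S U) :=
  monotone_nat_of_le_succ fun _ => Set.subset_union_left

theorem subset_attrIn : U ⊆ G.attrIn i S U := Set.subset_iUnion (G.attrInN i S U) 0

theorem attrIn_subset (hU : U ⊆ S) : G.attrIn i S U ⊆ S := by
  refine Set.iUnion_subset fun n => ?_
  induction n with
  | zero => exact hU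
  | succ n ih => exact Set.union_subset ih fun _ hv => hv.1

theorem mem_attrIn_of_owner_eq {v w : V} (hv : v ∈ S) (ho : G.ownerEven v = i) (hE : G.E v w)
    (hw : w ∈ G.attrIn i S U) : v ∈ G.attrIn i S U := by
  obtain ⟨n, hn⟩ := Set.mem_iUnion.mp hw
  exact Set.mem_iUnion.mpr ⟨n + 1, Or.inr ⟨hv, Or.inl ⟨ho, w, hn, hE⟩⟩⟩

theorem mem_attrIn_of_owner_ne {v : V} (hv : v ∈ S) (ho : G.ownerEven v ≠ i)
    (h : ∀ w ∈ S, G.E v w → w ∈ G.attrIn i S U) : v ∈ G.attrIn i S U := by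
  have hrank : ∀ w, ∃ n, w ∈ S → G.E v w → w ∈ G.attrInN i S U n := by
    intro w
    by_cases hw : w ∈ S ∧ G.E v w
    · obtain ⟨n, hn⟩ := Set.mem_iUnion.mp (h w hw.1 hw.2)
      exact ⟨n, fun _ _ => hn⟩
    · exact ⟨0, fun h1 h2 => absurd ⟨h1, h2⟩ hw⟩
  choose r hr using hrank
  refine Set.mem_iUnion.mpr ⟨Finset.univ.sup r + 1, Or.inr ⟨hv, Or.inr ⟨ho, fun w hw hE => ?_⟩⟩⟩
  exact G.attrInN_mono (Finset.le_sup (Finset.mem_univ w)) (hr w hw hE)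

theorem IsSubgame.diff_attrIn (hS : G.IsSubgame S) : G.IsSubgame (S \ G.attrIn i S U) := by
  intro v ⟨hvS, hvA⟩
  by_cases ho : G.ownerEven v = i
  · obtain ⟨w, hwS, hE⟩ := hS v hvS
    exact ⟨w, ⟨hwS, fun hwA => hvA (G.mem_attrIn_of_owner_eq hvS ho hE hwA)⟩, hE⟩
  · by_contra! h
    exact hvA (G.mem_attrIn_of_owner_ne hvS ho fun w hwS hE => not_not.mp (h w ⟨hwS, ·⟩ hE))

theorem exists_succ_mem_attrInN {n : ℕ} {v : V} (hv : v ∈ G.attrInN i S U (n + 1))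
    (hvU : v ∉ U) (ho : G.ownerEven v = i) : ∃ w ∈ G.attrInN i S U n, G.E v w := by
  induction n with
  | zero => exact ((hv.resolve_left hvU).2.resolve_right fun h => h.1 ho).2
  | succ n ih =>
    rcases hv with hv | ⟨-, hown | hopp⟩
    · obtain ⟨w, hw, hE⟩ := ih hv
      exact ⟨w, G.attrInN_mono n.le_succ hw, hE⟩
    · exact hown.2
    · exact absurd ho hopp.1

theorem succ_mem_attrInN {n : ℕ} {v w : V} (hv : v ∈ G.attrInN i S U (n + 1)) (hvU : v ∉ U)
    (ho : G.ownerEven v ≠ i) (hw : w ∈ S) (hE : G.E v w) : w ∈ G.attrInN i S U n := by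
  induction n with
  | zero => exact ((hv.resolve_left hvU).2.resolve_left fun h => ho h.1).2 w hw hE
  | succ n ih =>
    rcases hv with hv | ⟨-, hown | hopp⟩
    · exact G.attrInN_mono n.le_succ (ih hv)
    · exact absurd hown.1 ho
    · exact hopp.2 w hw hE

theorem succ_mem_attrIn {v w : V} (hv : v ∈ G.attrIn i S U) (hvU : v ∉ U)
    (ho : G.ownerEven v ≠ i) (hw : w ∈ S) (hE : G.E v w) : w ∈ G.attrIn i S U := by
  obtain ⟨n, hn⟩ := Set.mem_iUnion.mp hv
  cases n with
  | zero => exact absurd hn hvU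
  | succ n => exact Set.mem_iUnion.mpr ⟨n, G.succ_mem_attrInN hn hvU ho hw hE⟩

theorem exists_attrIn_strategy (hS : G.IsSubgame S) (hU : U ⊆ S) :
    ∃ σ : V → V, (∀ u ∈ S, G.E u (σ u) ∧ σ u ∈ S) ∧
      ∀ n, ∀ u ∈ G.attrInN i S U (n + 1), u ∉ U → G.ownerEven u = i →
        σ u ∈ G.attrInN i S U n := by
  have hmove : ∀ u, ∃ w, (u ∈ S → G.E u w ∧ w ∈ S) ∧
      ∀ n, u ∈ G.attrInN i S U (n + 1) → u ∉ U → G.ownerEven u = i →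
        w ∈ G.attrInN i S U n := by
    intro u
    by_cases hu : u ∈ G.attrIn i S U ∧ u ∉ U ∧ G.ownerEven u = i
    · obtain ⟨hA, hUu, ho⟩ := hu
      have hex : ∃ n, u ∈ G.attrInN i S U n := Set.mem_iUnion.mp hA
      obtain ⟨m, hm⟩ : ∃ m, Nat.find hex = m + 1 :=
        Nat.exists_eq_add_one.mpr (Nat.pos_of_ne_zero fun h => hUu (by
          simpa only [h, attrInN] using Nat.find_spec hex))
      obtain ⟨w, hw, hE⟩ := G.exists_succ_mem_attrInN (hm ▸ Nat.find_spec hex) hUu ho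
      refine ⟨w, fun _ => ⟨hE, G.attrIn_subset hU (Set.mem_iUnion_of_mem m hw)⟩,
        fun n hn _ _ => G.attrInN_mono ?_ hw⟩
      have := Nat.find_min' hex hn
      omega
    · refine ⟨if h : u ∈ S then (hS u h).choose else u, fun h => ?_, fun n hn hUu ho => ?_⟩
      · rw [dif_pos h]
        exact ⟨(hS u h).choose_spec.2, (hS u h).choose_spec.1⟩
      · exact absurd ⟨Set.mem_iUnion_of_mem _ hn, hUu, ho⟩ hu
  choose σ hσS hσA using hmove
  exact ⟨σ, hσS, fun n u hu => hσA u n hu⟩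

theorem exists_mem_of_mem_attrIn {σ : V → V}
    (hσ : ∀ n, ∀ u ∈ G.attrInN i S U (n + 1), u ∉ U → G.ownerEven u = i →
      σ u ∈ G.attrInN i S U n)
    {π : ℕ → V} (hplay : G.IsPlay π) (hS : ∀ k, π k ∈ S)
    (hcons : G.ConsOn i σ (G.attrIn i S U \ U) π) (h0 : π 0 ∈ G.attrIn i S U) :
    ∃ m, π m ∈ U := by
  obtain ⟨n, hn⟩ := Set.mem_iUnion.mp h0
  induction n generalizing π with
  | zero => exact ⟨0, hn⟩
  | succ n ih =>
    by_cases hU : π 0 ∈ U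
    · exact ⟨0, hU⟩
    have h1 : π 1 ∈ G.attrInN i S U n := by
      by_cases ho : G.ownerEven (π 0) = i
      · exact hcons 0 ⟨h0, hU⟩ ho ▸ hσ n _ hn hU ho
      · exact G.succ_mem_attrInN hn hU ho (hS 1) (hplay 0)
    obtain ⟨m, hm⟩ := ih (hplay.shift 1) (fun k => hS (k + 1)) (hcons.shift 1)
      (Set.mem_iUnion_of_mem n h1) h1
    exact ⟨m + 1, hm⟩

end Attractors

section Determinacy

variable {G} {S W : Set V} {i : Bool}

namespace IsPositionalDominion

/-- Any escape of player `i` from `W` into `attrIn i S X` would put its source into that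
attractor too. -/
theorem of_diff_attrIn {X : Set V} {k : Bool} {σ : V → V} (hki : k ≠ i)
    (hW : G.IsPositionalDominion (S \ G.attrIn i S X) W k σ) :
    G.IsPositionalDominion S W k σ where
  subset := hW.subset.trans Set.sdiff_subset
  move := hW.move
  trap u hu ho w hwS hE := by
    have hoi : G.ownerEven u = i := by
      cases h : G.ownerEven u <;> cases k <;> cases i <;> simp_all
    exact hW.trap u hu ho w
      ⟨hwS, fun hwA => (hW.subset hu).2 (G.mem_attrIn_of_owner_eq (hW.subset hu).1 hoi hE hwA)⟩ hE
  wins := hW.wins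

theorem attrIn {U : Set V} {σ : V → V} (hS : G.IsSubgame S)
    (hU : G.IsPositionalDominion S U i σ) :
    ∃ σ', G.IsPositionalDominion S (G.attrIn i S U) i σ' := by
  obtain ⟨τ, hτS, hτA⟩ := G.exists_attrIn_strategy (i := i) hS hU.subset
  have hAS := G.attrIn_subset (i := i) hU.subset
  refine ⟨U.piecewise σ τ, hAS, fun u hu ho => ?_, fun u hu ho w hwS hE => ?_,
    fun π hplay hmem hcons => ?_⟩
  · by_cases huU : u ∈ U
    · rw [Set.piecewise_eq_of_mem _ _ _ huU]
      exact ⟨(hU.move u huU ho).1, G.subset_attrIn (hU.move u huU ho).2⟩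
    · rw [Set.piecewise_eq_of_notMem _ _ _ huU]
      refine ⟨(hτS u (hAS hu)).1, ?_⟩
      obtain ⟨n, hn⟩ := Set.mem_iUnion.mp hu
      cases n with
      | zero => exact absurd hn huU
      | succ n => exact Set.mem_iUnion_of_mem n (hτA n u hn huU ho)
  · by_cases huU : u ∈ U
    · exact G.subset_attrIn (hU.trap u huU ho w hwS hE)
    · exact G.succ_mem_attrIn hu huU ho hwS hE
  · have hS' : ∀ n, π n ∈ S := fun n => hAS (hmem n)
    obtain ⟨m, hm⟩ := G.exists_mem_of_mem_attrIn hτA hplay hS'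
      (hcons.consOn_piecewise_right.mono fun _ hu => hu.2) (hmem 0)
    exact hU.wonBy_of_mem hplay hS' hcons.consOn_piecewise_left hm

theorem union {B : Set V} {σB σW : V → V} (hB : G.IsPositionalDominion S B i σB)
    (hW : G.IsPositionalDominion (S \ B) W i σW) :
    G.IsPositionalDominion S (W ∪ B) i (B.piecewise σB σW) where
  subset := Set.union_subset (hW.subset.trans Set.sdiff_subset) hB.subset
  move u hu ho := by
    by_cases huB : u ∈ B
    · rw [Set.piecewise_eq_of_mem _ _ _ huB]
      exact ⟨(hB.move u huB ho).1, Or.inr (hB.move u huB ho).2⟩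
    · rw [Set.piecewise_eq_of_notMem _ _ _ huB]
      have huW := hu.resolve_right huB
      exact ⟨(hW.move u huW ho).1, Or.inl (hW.move u huW ho).2⟩
  trap u hu ho w hwS hE := by
    by_cases hwB : w ∈ B
    · exact Or.inr hwB
    · rcases hu with huW | huB
      · exact Or.inl (hW.trap u huW ho w ⟨hwS, hwB⟩ hE)
      · exact Or.inr (hB.trap u huB ho w hwS hE)
  wins π hplay hmem hcons := by
    have hS : ∀ n, π n ∈ S := fun n =>
      (hmem n).elim (fun h => (hW.subset h).1) (fun h => hB.subset h)
    by_cases h : ∃ k, π k ∈ B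
    · obtain ⟨k, hk⟩ := h
      exact hB.wonBy_of_mem hplay hS hcons.consOn_piecewise_left hk
    · push Not at h
      exact hW.wins π hplay (fun n => (hmem n).resolve_right (h n))
        (hcons.consOn_piecewise_right.consP h)

end IsPositionalDominion

/-- Zielonka's first case: a play either stays in `S \ A` from some point on, or it visits
the attractor `A`, hence the least priority `p`, infinitely often. -/
theorem isPositionalDominion_self_of_forall_prio_ge (hS : G.IsSubgame S) {p : ℕ}
    (hp : ∀ v ∈ S, p ≤ G.prio v) {σ₁ : V → V}
    (h₁ : G.IsPositionalDominion (S \ G.attrIn (decide (Even p)) S {v | v ∈ S ∧ G.prio v = p})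
      (S \ G.attrIn (decide (Even p)) S {v | v ∈ S ∧ G.prio v = p}) (decide (Even p)) σ₁) :
    ∃ σ, G.IsPositionalDominion S S (decide (Even p)) σ := by
  set A := G.attrIn (decide (Even p)) S {v | v ∈ S ∧ G.prio v = p}
  obtain ⟨τ, hτS, hτA⟩ := G.exists_attrIn_strategy (i := decide (Even p))
    (U := {v | v ∈ S ∧ G.prio v = p}) hS fun _ hv => hv.1
  refine ⟨(S \ A).piecewise σ₁ τ, subset_rfl, fun u hu ho => ?_, fun _ _ _ w hw _ => hw,
    fun π hplay hmem hcons => ?_⟩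
  · by_cases hu₁ : u ∈ S \ A
    · rw [Set.piecewise_eq_of_mem _ _ _ hu₁]
      exact ⟨(h₁.move u hu₁ ho).1, (h₁.move u hu₁ ho).2.1⟩
    · rw [Set.piecewise_eq_of_notMem _ _ _ hu₁]
      exact hτS u hu
  by_cases hA : ∀ N, ∃ n ≥ N, π n ∈ A
  · refine G.wonBy_of_forall_prio_ge (fun N => ?_) fun n => hp _ (hmem n)
    obtain ⟨n, hn, hnA⟩ := hA N
    obtain ⟨m, hm⟩ := G.exists_mem_of_mem_attrIn hτA (hplay.shift n) (fun k => hmem _)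
      ((hcons.consOn_piecewise_right.mono fun _ hu h => h.2 hu.1).shift n) (by simpa using hnA)
    exact ⟨m + n, by omega, hm.2⟩
  · push Not at hA
    obtain ⟨N, hN⟩ := hA
    have htail : ∀ n, π (n + N) ∈ S \ A := fun n => ⟨hmem _, hN _ (by omega)⟩
    exact (G.wonBy_shift_iff _ π N).mp <| h₁.wins _ (hplay.shift N) htail
      ((hcons.consOn_piecewise_left.shift N).consP htail)

variable (G) in
def PositionallyDetermined (S : Set V) : Prop :=
  ∀ i, ∃ X Y : Set V, ∃ σ τ : V → V, G.IsPositionalDominion S X i σ ∧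
    G.IsPositionalDominion S Y (!i) τ ∧ S ⊆ X ∪ Y

theorem positionallyDetermined_of_player (i : Bool)
    (h : ∃ X Y : Set V, ∃ σ τ : V → V, G.IsPositionalDominion S X i σ ∧
      G.IsPositionalDominion S Y (!i) τ ∧ S ⊆ X ∪ Y) :
    G.PositionallyDetermined S := by
  intro j
  obtain rfl | rfl : j = i ∨ j = !i := by cases i <;> cases j <;> simp
  · exact h
  · obtain ⟨X, Y, σ, τ, hX, hY, hc⟩ := h
    exact ⟨Y, X, τ, σ, hY, by rwa [Bool.not_not], by rwa [Set.union_comm]⟩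

theorem IsSubgame.positionallyDetermined (hS : G.IsSubgame S) : G.PositionallyDetermined S := by
  induction S using WellFoundedLT.induction with
  | _ S ih =>
  rcases S.eq_empty_or_nonempty with rfl | hne
  · exact fun i => ⟨∅, ∅, id, id, G.isPositionalDominion_empty _ _ _,
      G.isPositionalDominion_empty _ _ _, by simp⟩
  obtain ⟨v₀, hv₀, hv₀p⟩ := Nat.sInf_mem (hne.image G.prio)
  set p := sInf (G.prio '' S)
  have hp : ∀ v ∈ S, p ≤ G.prio v := fun v hv => Nat.sInf_le ⟨v, hv, rfl⟩
  set i := decide (Even p)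
  set A := G.attrIn i S {v | v ∈ S ∧ G.prio v = p}
  have hA : S \ A ⊂ S :=
    Set.sdiff_ssubset_left_iff.mpr ⟨v₀, hv₀, G.subset_attrIn ⟨hv₀, hv₀p⟩⟩
  obtain ⟨X₁, Y₁, σ₁, τ₁, hX₁, hY₁, hc₁⟩ := ih _ hA hS.diff_attrIn i
  apply positionallyDetermined_of_player i
  rcases Y₁.eq_empty_or_nonempty with rfl | ⟨u, hu⟩
  · have hX₁S : X₁ = S \ A := hX₁.subset.antisymm (by simpa using hc₁)
    obtain ⟨σ, hσ⟩ := G.isPositionalDominion_self_of_forall_prio_ge hS hp (hX₁S ▸ hX₁)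
    exact ⟨S, ∅, σ, id, hσ, G.isPositionalDominion_empty _ _ _, Set.subset_union_left⟩
  · obtain ⟨τ, hB⟩ := (hY₁.of_diff_attrIn (Bool.not_ne_self i)).attrIn hS
    set B := G.attrIn (!i) S Y₁
    have hB' : S \ B ⊂ S :=
      Set.sdiff_ssubset_left_iff.mpr ⟨u, (hY₁.subset hu).1, G.subset_attrIn hu⟩
    obtain ⟨X₂, Y₂, σ₂, τ₂, hX₂, hY₂, hc₂⟩ := ih _ hB' hS.diff_attrIn i
    refine ⟨X₂, Y₂ ∪ B, σ₂, B.piecewise τ τ₂, hX₂.of_diff_attrIn (Bool.self_ne_not i),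
      hB.union hY₂, fun v hv => ?_⟩
    by_cases hvB : v ∈ B
    · exact Or.inr (Or.inr hvB)
    · exact (hc₂ ⟨hv, hvB⟩).imp_right Or.inl

end Determinacy

section StrategyPlays

theorem hist_succ {α : Type*} (π : ℕ → α) (n : ℕ) : hist π (n + 1) = hist π n ++ [π n] := by
  simp only [hist, List.ofFn_succ', List.concat_eq_append, Fin.val_castSucc, Fin.val_last]

theorem exists_play_of_moves (σ : List V → V → V) (hσ : ∀ h u, G.E u (σ h u)) (v : V) :
    ∃ π, G.IsPlay π ∧ π 0 = v ∧ ∀ n, π (n + 1) = σ (hist π n) (π n) := by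
  let step : V × List V → V × List V := fun x => (σ x.2 x.1, x.2 ++ [x.1])
  let π : ℕ → V := fun n => (step^[n] (v, [])).1
  have hhist : ∀ n, (step^[n] (v, [])).2 = hist π n := by
    intro n
    induction n with
    | zero => rfl
    | succ n ih => rw [Function.iterate_succ_apply', hist_succ, ← ih]
  have hπ : ∀ n, π (n + 1) = σ (hist π n) (π n) := fun n => by
    simp only [π, Function.iterate_succ_apply', step, hhist]
  exact ⟨π, fun n => hπ n ▸ hσ _ _, rfl, hπ⟩

variable {G}

theorem IsPositionalDominion.edge_piecewise {S X : Set V} {i : Bool} {σ : V → V}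
    (hX : G.IsPositionalDominion S X i σ) {u : V} (ho : G.ownerEven u = i) :
    G.E u (X.piecewise σ (fun u => (G.total u).choose) u) := by
  by_cases hu : u ∈ X
  · rw [Set.piecewise_eq_of_mem _ _ _ hu]
    exact (hX.move u hu ho).1
  · rw [Set.piecewise_eq_of_notMem _ _ _ hu]
    exact (G.total u).choose_spec

theorem IsPositionalDominion.exists_play {X : Set V} {i : Bool} {σ : V → V}
    (hX : G.IsPositionalDominion Set.univ X i σ) {v : V} (hv : v ∈ X) :
    ∃ π, G.IsPlay π ∧ π 0 = v ∧ G.ConsP i σ π := by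
  let τ : V → V := X.piecewise σ fun u => (G.total u).choose
  obtain ⟨π, hplay, h0, hπ⟩ := G.exists_play_of_moves
    (fun _ u => if G.ownerEven u = i then τ u else (G.total u).choose)
    (fun _ u => by split_ifs with ho; exacts [hX.edge_piecewise ho, (G.total u).choose_spec]) v
  have hcons : G.ConsP i τ π := fun n ho => by rw [hπ n, if_pos ho]
  have hmem := hX.forall_mem hplay (fun _ => trivial) (hcons.consOn_piecewise_left) (h0 ▸ hv)
  exact ⟨π, hplay, h0, fun n ho => (hcons n ho).trans (Set.piecewise_eq_of_mem _ _ _ (hmem n))⟩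

theorem IsPositionalDominion.notMem_winRegion {Y : Set V} {τ : V → V}
    (hY : G.IsPositionalDominion Set.univ Y false τ) {v : V} (hv : v ∈ Y) :
    v ∉ G.WinRegion true := by
  rintro ⟨σ, hσ, hwin⟩
  let τ' : V → V := Y.piecewise τ fun u => (G.total u).choose
  obtain ⟨π, hplay, h0, hπ⟩ := G.exists_play_of_moves
    (fun h u => if G.ownerEven u = true then σ h u else τ' u)
    (fun h u => by
      split_ifs with ho
      exacts [hσ h u ho, hY.edge_piecewise (Bool.eq_false_iff.mpr ho)]) v
  have hconsOdd : G.ConsP false τ' π := fun n ho => by rw [hπ n, if_neg (by simp [ho])]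
  exact G.not_wonBy_of_wonBy_not (i := true)
    (hY.wonBy hplay (fun _ => trivial) hconsOdd.consOn_piecewise_left (h0 ▸ hv))
    (hwin π hplay h0 fun n ho => by rw [hπ n, if_pos ho])

end StrategyPlays

section Lasso

/-- The positions `0, 1, …, b - 1, a, a + 1, …, b - 1, a, …` of the lasso that runs through a
play up to position `b` and then repeats the segment from `a` to `b - 1` forever. -/
def lassoIndex (a b : ℕ) : ℕ → ℕ
  | 0 => 0
  | n + 1 => if lassoIndex a b n + 1 = b then a else lassoIndex a b n + 1

variable {a b : ℕ}

theorem lassoIndex_of_lt {n : ℕ} (hn : n < b) : lassoIndex a b n = n := by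
  induction n with
  | zero => rfl
  | succ n ih => rw [lassoIndex, ih (by omega), if_neg (by omega)]

theorem lassoIndex_mem (hab : a < b) {n : ℕ} (hn : a ≤ n) :
    a ≤ lassoIndex a b n ∧ lassoIndex a b n < b := by
  induction n, hn using Nat.le_induction with
  | base => rw [lassoIndex_of_lt hab]; exact ⟨le_rfl, hab⟩
  | succ n _ ih =>
    rw [lassoIndex]
    split_ifs with h
    · exact ⟨le_rfl, hab⟩
    · omega

theorem lassoIndex_add_sub (hab : a < b) {n : ℕ} (hn : a ≤ n) :
    lassoIndex a b (n + (b - a)) = lassoIndex a b n := by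
  induction n, hn using Nat.le_induction with
  | base =>
    obtain ⟨c, rfl⟩ : ∃ c, b = c + 1 := Nat.exists_eq_add_one.mpr (by omega)
    rw [show a + (c + 1 - a) = c + 1 by omega, lassoIndex, lassoIndex_of_lt (by omega),
      if_pos rfl, lassoIndex_of_lt hab]
  | succ n _ ih => rw [show n + 1 + (b - a) = n + (b - a) + 1 by omega, lassoIndex, ih, lassoIndex]

theorem lassoIndex_add_mul (hab : a < b) (N : ℕ) : lassoIndex a b (a + N * (b - a)) = a := by
  induction N with
  | zero => simpa using lassoIndex_of_lt (a := a) hab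
  | succ N ih => rw [Nat.succ_mul, ← Nat.add_assoc, lassoIndex_add_sub hab (by omega), ih]

theorem lasso_succ {α : Type*} {π : ℕ → α} (heq : π a = π b) (n : ℕ) :
    π (lassoIndex a b (n + 1)) = π (lassoIndex a b n + 1) := by
  rw [lassoIndex]
  split_ifs with h
  · rw [heq, h]
  · rfl

variable {G}

theorem IsPlay.lasso {π : ℕ → V} (hplay : G.IsPlay π) (heq : π a = π b) :
    G.IsPlay (fun n => π (lassoIndex a b n)) :=
  fun n => by simpa only [lasso_succ heq n] using hplay _

theorem ConsP.lasso {i : Bool} {σ : V → V} {π : ℕ → V} (hcons : G.ConsP i σ π)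
    (heq : π a = π b) : G.ConsP i σ (fun n => π (lassoIndex a b n)) :=
  fun n ho => (lasso_succ heq n).trans (hcons _ ho)

end Lasso

section StrategyMeasure

theorem degree_cons (v : V) (π : ℕ → V) (j l : ℕ) :
    G.degree (Stream'.cons v π) j (l + 1) = G.degree π j l + if G.prio v = j then 1 else 0 := by
  simp only [degree, Finset.card_filter, Finset.sum_range_succ' _ (l + 1)]
  rfl

theorem domStretchPrefix_cons {v : V} {π : ℕ → V} {j l : ℕ} (hv : j ≤ G.prio v)
    (h : G.domStretchPrefix π j l) : G.domStretchPrefix (Stream'.cons v π) j (l + 1) := by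
  obtain ⟨hge, m, hm, hmj⟩ := h
  refine ⟨fun m hm => ?_, m + 1, by omega, hmj⟩
  cases m with
  | zero => exact hv
  | succ m => exact hge m (by omega)

def degreeSet (τ : V → V) (v : V) (j : ℕ) : Set ℕ :=
  {c | ∃ π, G.IsPlay π ∧ π 0 = v ∧ G.ConsP true τ π ∧
    ∃ l, G.domStretchPrefix π j l ∧ c = G.degree π j l}

variable {G} {X : Set V} {τ : V → V}

theorem add_mem_degreeSet {v w : V} (hE : G.E v w) (hτ : G.ownerEven v = true → w = τ v)
    {j c : ℕ} (hj : j ≤ G.prio v) (hc : c ∈ G.degreeSet τ w j) :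
    c + (if G.prio v = j then 1 else 0) ∈ G.degreeSet τ v j := by
  obtain ⟨π, hplay, h0, hcons, l, hdom, rfl⟩ := hc
  refine ⟨Stream'.cons v π, fun n => ?_, rfl, fun n ho => ?_, l + 1,
    G.domStretchPrefix_cons hj hdom, (G.degree_cons v π j l).symm⟩
  · cases n with
    | zero => exact (show G.E v (π 0) from h0 ▸ hE)
    | succ n => exact hplay n
  · cases n with
    | zero => exact h0.trans (hτ ho)
    | succ n => exact hcons n ho

theorem one_mem_degreeSet (hX : G.IsPositionalDominion Set.univ X true τ) {v : V} (hv : v ∈ X) :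
    1 ∈ G.degreeSet τ v (G.prio v) := by
  obtain ⟨π, hplay, h0, hcons⟩ := hX.exists_play hv
  refine ⟨π, hplay, h0, hcons, 0, ⟨fun m hm => ?_, 0, le_rfl, h0 ▸ rfl⟩, ?_⟩
  · rw [Nat.le_zero.mp hm, h0]
  · rw [degree, Finset.range_one, Finset.filter_singleton, if_pos (by rw [h0])]
    rfl

/-- A `j`-dominated prefix of a `τ`-play from Even's dominion visits no vertex of odd
priority `j` twice: the lasso through such a repetition would be a `τ`-play won by Odd. -/
theorem le_nP_of_mem_degreeSet (hX : G.IsPositionalDominion Set.univ X true τ) {v : V}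
    (hv : v ∈ X) {j c : ℕ} (hj : ¬ Even j) (hc : c ∈ G.degreeSet τ v j) : c ≤ G.nP j := by
  obtain ⟨π, hplay, h0, hcons, l, ⟨hge, -⟩, rfl⟩ := hc
  have hcycle : ∀ a b, a < b → b ≤ l → π a = π b → G.prio (π a) = j → False := by
    intro a b hab hbl heq haj
    set π' := fun n => π (lassoIndex a b n)
    have hwin : G.WonBy true π' :=
      hX.wonBy (hplay.lasso heq) (fun _ => trivial) (fun n _ => hcons.lasso heq n)
        (by simpa [π', lassoIndex] using h0 ▸ hv)
    have hinf : G.InfOft π' j := fun N =>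
      ⟨a + N * (b - a), by nlinarith [Nat.le_mul_of_pos_right N (show 0 < b - a by omega)],
        by simp only [π', lassoIndex_add_mul hab, haj]⟩
    have hmin : ∀ q, G.InfOft π' q → j ≤ q := by
      intro q hq
      obtain ⟨n, hn, rfl⟩ := hq a
      exact hge _ (by have := lassoIndex_mem hab hn; omega)
    exact hj ((G.wonByEven_iff_of_infOft hinf hmin).mp hwin)
  by_contra! hlt
  obtain ⟨a, ha, b, hb, hne, heq⟩ := Finset.exists_ne_map_eq_of_card_lt_of_maps_to
    (t := Finset.univ.filter fun u => G.prio u = j) hlt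
    (f := π) fun m hm => by simpa using (Finset.mem_filter.mp hm).2
  simp only [Finset.mem_filter, Finset.mem_range] at ha hb
  rcases hne.lt_or_gt with hab | hba
  · exact hcycle a b hab (by omega) heq ha.2
  · exact hcycle b a hba (by omega) heq.symm hb.2

theorem bddAbove_degreeSet (hX : G.IsPositionalDominion Set.univ X true τ) {v : V} (hv : v ∈ X)
    {j : ℕ} (hj : ¬ Even j) : BddAbove (G.degreeSet τ v j) :=
  ⟨G.nP j, fun _ hc => le_nP_of_mem_degreeSet hX hv hj hc⟩

theorem sSup_degreeSet_add_le (hX : G.IsPositionalDominion Set.univ X true τ) {v w : V}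
    (hv : v ∈ X) (hw : w ∈ X) (hE : G.E v w) (hτ : G.ownerEven v = true → w = τ v) {j : ℕ}
    (hjv : j ≤ G.prio v) (hj : ¬ Even j) :
    sSup (G.degreeSet τ w j) + (if G.prio v = j then 1 else 0) ≤ sSup (G.degreeSet τ v j) := by
  rcases (G.degreeSet τ w j).eq_empty_or_nonempty with h | h
  · rw [h, csSup_empty, bot_eq_zero', Nat.zero_add]
    split_ifs with hvj
    · exact le_csSup (bddAbove_degreeSet hX hv hj) (hvj ▸ one_mem_degreeSet hX hv)
    · exact Nat.zero_le _
  · exact le_csSup (bddAbove_degreeSet hX hv hj)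
      (add_mem_degreeSet hE hτ hjv (Nat.sSup_mem h (bddAbove_degreeSet hX hw hj)))

variable (G) in
def strategyMeasure (X : Set V) (τ : V → V) (v : V) : G.Meas :=
  if v ∈ X then
    (toLex fun j : Fin G.d => if Even (j : ℕ) then 0 else sSup (G.degreeSet τ v j) :
      Lex (Fin G.d → ℕ))
  else ⊤

theorem strategyMeasure_of_mem {v : V} (hv : v ∈ X) :
    G.strategyMeasure X τ v = (toLex fun j : Fin G.d =>
      if Even (j : ℕ) then 0 else sSup (G.degreeSet τ v j) : Lex (Fin G.d → ℕ)) :=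
  if_pos hv

theorem strategyMeasure_of_notMem {v : V} (hv : v ∉ X) : G.strategyMeasure X τ v = ⊤ :=
  if_neg hv

theorem isMeasure_strategyMeasure (hX : G.IsPositionalDominion Set.univ X true τ) :
    G.IsMeasure (G.strategyMeasure X τ) := by
  intro v
  by_cases hv : v ∈ X
  · refine Or.inr ⟨_, strategyMeasure_of_mem hv, fun j => ⟨fun hj => if_pos hj, fun hj => ?_⟩⟩
    rw [if_neg hj]
    exact csSup_le' fun _ hc => le_nP_of_mem_degreeSet hX hv hj hc
  · exact Or.inl (strategyMeasure_of_notMem hv)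

theorem geAt_prog_strategyMeasure (hX : G.IsPositionalDominion Set.univ X true τ) {v w : V}
    (hv : v ∈ X) (hw : w ∈ X) (hE : G.E v w) (hτ : G.ownerEven v = true → w = τ v) :
    G.geAt (G.prio v) (G.strategyMeasure X τ v) (G.Prog (G.strategyMeasure X τ) v w) := by
  refine G.geAt_prog (isMeasure_strategyMeasure hX v) (G.progCond_self_of_le
    (strategyMeasure_of_mem hv) (strategyMeasure_of_mem hw) (fun j hj => ?_) fun hp => ?_)
  · split_ifs with hje
    · exact le_rfl
    · simpa using (sSup_degreeSet_add_le hX hv hw hE hτ hj hje).trans' (Nat.le_add_right _ _)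
  · simpa [hp] using sSup_degreeSet_add_le hX hv hw hE hτ le_rfl hp

theorem isGPM_strategyMeasure (hX : G.IsPositionalDominion Set.univ X true τ) :
    G.IsGPM (G.strategyMeasure X τ) := by
  refine ⟨isMeasure_strategyMeasure hX, fun v => ⟨fun ho => ?_, fun ho w hE => ?_⟩⟩
  · by_cases hv : v ∈ X
    · obtain ⟨hE, hτX⟩ := hX.move v hv ho
      exact ⟨τ v, hE, geAt_prog_strategyMeasure hX hv hτX hE fun _ => rfl⟩
    · obtain ⟨w, hE⟩ := G.total v
      exact ⟨w, hE, strategyMeasure_of_notMem hv ▸ G.geAt_top _ _⟩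
  · by_cases hv : v ∈ X
    · have hw := hX.trap v hv (by simp [ho]) w trivial hE
      exact geAt_prog_strategyMeasure hX hv hw hE fun h => absurd (ho ▸ h) Bool.false_ne_true
    · exact strategyMeasure_of_notMem hv ▸ G.geAt_top _ _

end StrategyMeasure

end ParityGame

theorem least_progress_measure_characterizes_winning_region_general
    {V : Type*} [Fintype V] (G : ParityGame V)
    (ρbar : V → G.Meas) (hgpm : G.IsGPM ρbar)
    (hleast : ∀ ρ : V → G.Meas, G.IsGPM ρ → ∀ v, ρbar v ≤ ρ v) :
    ∀ v : V, ρbar v ≠ ⊤ ↔ v ∈ G.WinRegion true := by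
  intro v
  refine ⟨G.mem_winRegion_of_isGPM hgpm, fun hwin htop => ?_⟩
  have huniv : G.IsSubgame Set.univ := fun u _ => (G.total u).imp fun _ h => ⟨trivial, h⟩
  obtain ⟨X, Y, τ, _, hX, hY, hcover⟩ := huniv.positionallyDetermined true
  have hvX : v ∈ X := (hcover trivial).resolve_right fun hvY => hY.notMem_winRegion hvY hwin
  have hle := hleast _ (isGPM_strategyMeasure hX) v
  rw [htop, top_le_iff, strategyMeasure_of_mem hvX] at hle
  exact WithTop.coe_ne_top hle

/-- the least game parity progress measure characterises the winning
region of player Even: `ρ̄(v) ≠ ⊤` iff Even wins from `v`. -/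
theorem least_progress_measure_characterizes_winning_region
    {V : Type*} [Fintype V] [DecidableEq V] (G : ParityGame V)
    (ρbar : V → G.Meas) (hgpm : G.IsGPM ρbar)
    (hleast : ∀ ρ : V → G.Meas, G.IsGPM ρ → ∀ v, ρbar v ≤ ρ v) :
    ∀ v : V, ρbar v ≠ ⊤ ↔ v ∈ G.WinRegion true :=
  least_progress_measure_characterizes_winning_region_general G ρbar hgpm hleast

end
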